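/- arXiv:0910.1047 — 5 statements merged into one kernel-verified Lean document; each statement's English description precedes it below -/
import Mathlib

section
/- Let A be a Poisson algebra with generators y^1,...,y^M and bracket {y^α,y^β}_A = F^{αβ}(y), and B another Poisson algebra. Suppose Δ_λ, Δ_μ : A → B satisfy {Δ_λ(y^α), Δ_μ(y^β)}_B = Σ_γ g^β_γ · F^{αγ}(Δ_λ(y)) + Σ_γ h^α_γ · F^{γβ}(Δ_μ(y)) for some functions g^β_γ, h^α_γ on B. Then for any two Casimir functions C_j, C_l of A, {Δ_λ(C_j), Δ_μ(C_l)}_B = 0. -/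
/-- The Poisson bracket on functions on ℝ^K (the manifold underlying the Poisson
algebra `B`) given by a Poisson bivector `W`. -/
noncomputable def pbB (K : ℕ) (W : Fin K → Fin K → (Fin K → ℝ) → ℝ)
    (P Q : (Fin K → ℝ) → ℝ) : (Fin K → ℝ) → ℝ :=
  fun z => ∑ a, ∑ b,
    fderiv ℝ P z (Pi.single a 1) * fderiv ℝ Q z (Pi.single b 1) * W a b z

lemma clm_apply_sum {M : ℕ} (L : (Fin M → ℝ) →L[ℝ] ℝ) (w : Fin M → ℝ) :
    L w = ∑ α, w α * L (Pi.single α 1) := by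
  have hw : w = ∑ α, w α • (Pi.single α 1 : Fin M → ℝ) := by
    funext i
    simp [Finset.sum_apply, Pi.single_apply]
  conv_lhs => rw [hw]
  rw [map_sum]
  simp [smul_eq_mul]

lemma sum3_rot {A B C : Type*} [Fintype A] [Fintype B] [Fintype C] (f : A → B → C → ℝ) :
    ∑ a, ∑ b, ∑ c, f a b c = ∑ b, ∑ c, ∑ a, f a b c := by
  rw [Finset.sum_comm]
  exact Finset.sum_congr rfl fun b _ => Finset.sum_comm

lemma sum4_swap {A B C D : Type*} [Fintype A] [Fintype B] [Fintype C] [Fintype D]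
    (f : A → B → C → D → ℝ) :
    (∑ a, ∑ b, ∑ c, ∑ d, f a b c d) = ∑ c, ∑ d, ∑ a, ∑ b, f a b c d := by
  have h1 : ∀ a : A, (∑ b, ∑ c, ∑ d, f a b c d) = ∑ c, ∑ d, ∑ b, f a b c d :=
    fun a => sum3_rot (fun b c d => f a b c d)
  simp only [h1]
  rw [Finset.sum_comm]
  exact Finset.sum_congr rfl fun c _ => Finset.sum_comm

/-- with `X α = Δ_λ(y^α)`, `Y β = Δ_μ(y^β)` and
`{X α, Y β}_B = ∑ γ g^β_γ F^{αγ}(X) + ∑ γ h^α_γ F^{γβ}(Y)`, any two Casimir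
functions `Cj`, `Cl` of `A` (with antisymmetric structure functions `F`) satisfy
`{Δ_λ(Cj), Δ_μ(Cl)}_B = 0`. -/
theorem loop_coproduct_casimirs_in_involution (M K : ℕ)
    (F : Fin M → Fin M → (Fin M → ℝ) → ℝ)
    (hFanti : ∀ α β y, F α β y = - F β α y)
    (W : Fin K → Fin K → (Fin K → ℝ) → ℝ)
    (X Y : Fin M → (Fin K → ℝ) → ℝ)
    (hX : ∀ α, ContDiff ℝ (⊤ : ℕ∞) (X α)) (hY : ∀ β, ContDiff ℝ (⊤ : ℕ∞) (Y β))
    (g h : Fin M → Fin M → (Fin K → ℝ) → ℝ)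
    (hbr : ∀ α β, pbB K W (X α) (Y β)
      = fun z => (∑ γ, g β γ z * F α γ (fun δ => X δ z))
               + (∑ γ, h α γ z * F γ β (fun δ => Y δ z)))
    (Cj Cl : (Fin M → ℝ) → ℝ)
    (hCj : ContDiff ℝ (⊤ : ℕ∞) Cj) (hCl : ContDiff ℝ (⊤ : ℕ∞) Cl)
    (hCasj : ∀ (γ : Fin M) (y : Fin M → ℝ),
      ∑ α, fderiv ℝ Cj y (Pi.single α 1) * F α γ y = 0)
    (hCasl : ∀ (γ : Fin M) (y : Fin M → ℝ),
      ∑ α, fderiv ℝ Cl y (Pi.single α 1) * F α γ y = 0) :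
    pbB K W (fun z => Cj (fun α => X α z)) (fun z => Cl (fun β => Y β z)) = 0 := by
  funext z
  have hXd : ∀ α, Differentiable ℝ (X α) := fun α => (hX α).differentiable (by simp)
  have hYd : ∀ β, Differentiable ℝ (Y β) := fun β => (hY β).differentiable (by simp)
  have hCjd : Differentiable ℝ Cj := hCj.differentiable (by simp)
  have hCld : Differentiable ℝ Cl := hCl.differentiable (by simp)
  set u : Fin M → ℝ := fun α => X α z with hu
  set v : Fin M → ℝ := fun β => Y β z with hv
  set cj : Fin M → ℝ := fun α => fderiv ℝ Cj u (Pi.single α 1) with hcj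
  set cl : Fin M → ℝ := fun β => fderiv ℝ Cl v (Pi.single β 1) with hcl
  set xd : Fin M → Fin K → ℝ := fun α a => fderiv ℝ (X α) z (Pi.single a 1) with hxd
  set yd : Fin M → Fin K → ℝ := fun β b => fderiv ℝ (Y β) z (Pi.single b 1) with hyd
  have hXpi : DifferentiableAt ℝ (fun z (α : Fin M) => X α z) z :=
    differentiableAt_pi.2 fun α => (hXd α).differentiableAt
  have hYpi : DifferentiableAt ℝ (fun z (β : Fin M) => Y β z) z :=
    differentiableAt_pi.2 fun β => (hYd β).differentiableAt
  have hDj : ∀ e, fderiv ℝ (fun z => Cj (fun α => X α z)) z e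
      = ∑ α, cj α * fderiv ℝ (X α) z e := by
    intro e
    have hc : fderiv ℝ (fun z => Cj (fun α => X α z)) z
        = (fderiv ℝ Cj u).comp (fderiv ℝ (fun z (α : Fin M) => X α z) z) :=
      fderiv_comp z (hCjd u) hXpi
    rw [hc]
    simp only [ContinuousLinearMap.comp_apply]
    rw [fderiv_pi (fun α => (hXd α).differentiableAt)]
    rw [clm_apply_sum]
    simp only [ContinuousLinearMap.pi_apply]
    exact Finset.sum_congr rfl fun α _ => by rw [mul_comm]
  have hDl : ∀ e, fderiv ℝ (fun z => Cl (fun β => Y β z)) z e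
      = ∑ β, cl β * fderiv ℝ (Y β) z e := by
    intro e
    have hc : fderiv ℝ (fun z => Cl (fun β => Y β z)) z
        = (fderiv ℝ Cl v).comp (fderiv ℝ (fun z (β : Fin M) => Y β z) z) :=
      fderiv_comp z (hCld v) hYpi
    rw [hc]
    simp only [ContinuousLinearMap.comp_apply]
    rw [fderiv_pi (fun β => (hYd β).differentiableAt)]
    rw [clm_apply_sum]
    simp only [ContinuousLinearMap.pi_apply]
    exact Finset.sum_congr rfl fun β _ => by rw [mul_comm]
  have hinner : ∀ α β, (∑ a, ∑ b, xd α a * yd β b * W a b z)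
      = (∑ γ, g β γ z * F α γ u) + (∑ γ, h α γ z * F γ β v) := by
    intro α β
    have := congrFun (hbr α β) z
    simpa [pbB, hxd, hyd, hu, hv] using this
  have hcasj' : ∀ γ, ∑ α, cj α * F α γ u = 0 := fun γ => hCasj γ u
  have hcasl' : ∀ γ, ∑ β, cl β * F γ β v = 0 := by
    intro γ
    have h1 : ∀ β, cl β * F γ β v = -(cl β * F β γ v) := fun β => by
      rw [hFanti γ β]; ring
    simp only [h1, Finset.sum_neg_distrib]
    exact neg_eq_zero.2 (hCasl γ v)
  show (∑ a, ∑ b,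
      fderiv ℝ (fun z => Cj (fun α => X α z)) z (Pi.single a 1) *
      fderiv ℝ (fun z => Cl (fun β => Y β z)) z (Pi.single b 1) * W a b z) = 0
  calc (∑ a, ∑ b,
      fderiv ℝ (fun z => Cj (fun α => X α z)) z (Pi.single a 1) *
      fderiv ℝ (fun z => Cl (fun β => Y β z)) z (Pi.single b 1) * W a b z)
      = ∑ a, ∑ b, ∑ α, ∑ β, cj α * cl β * (xd α a * yd β b * W a b z) := by
        refine Finset.sum_congr rfl fun a _ => Finset.sum_congr rfl fun b _ => ?_
        rw [hDj, hDl, Finset.sum_mul_sum, Finset.sum_mul]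
        refine Finset.sum_congr rfl fun α _ => ?_
        rw [Finset.sum_mul]
        exact Finset.sum_congr rfl fun β _ => by ring
    _ = ∑ α, ∑ β, ∑ a, ∑ b, cj α * cl β * (xd α a * yd β b * W a b z) :=
        sum4_swap _
    _ = ∑ α, ∑ β, cj α * cl β * ((∑ γ, g β γ z * F α γ u) + (∑ γ, h α γ z * F γ β v)) := by
        refine Finset.sum_congr rfl fun α _ => Finset.sum_congr rfl fun β _ => ?_
        rw [← hinner α β]
        simp only [Finset.mul_sum]
    _ = (∑ α, ∑ β, ∑ γ, (cl β * g β γ z) * (cj α * F α γ u))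
        + (∑ α, ∑ β, ∑ γ, (cj α * h α γ z) * (cl β * F γ β v)) := by
        rw [← Finset.sum_add_distrib]
        refine Finset.sum_congr rfl fun α _ => ?_
        rw [← Finset.sum_add_distrib]
        refine Finset.sum_congr rfl fun β _ => ?_
        rw [mul_add]
        congr 1
        · rw [Finset.mul_sum]; exact Finset.sum_congr rfl fun γ _ => by ring
        · rw [Finset.mul_sum]; exact Finset.sum_congr rfl fun γ _ => by ring
    _ = 0 := by
        have t1 : (∑ α, ∑ β, ∑ γ, (cl β * g β γ z) * (cj α * F α γ u)) = 0 := by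
          rw [sum3_rot]
          refine Finset.sum_eq_zero fun β _ => Finset.sum_eq_zero fun γ _ => ?_
          rw [← Finset.mul_sum, hcasj' γ, mul_zero]
        have t2 : (∑ α, ∑ β, ∑ γ, (cj α * h α γ z) * (cl β * F γ β v)) = 0 := by
          refine Finset.sum_eq_zero fun α _ => ?_
          rw [Finset.sum_comm]
          refine Finset.sum_eq_zero fun γ _ => ?_
          rw [← Finset.mul_sum, hcasl' γ, mul_zero]
        rw [t1, t2, add_zero]
end

section
/- Suppose the N×N matrix L(λ) over a Poisson algebra satisfies the componentwise r-matrix relation {L_{ij}(λ), L_{kl}(μ)} = Σ_a [ r_{ia,kl}(λ,μ) L_{aj}(λ) − r_{aj,kl}(λ,μ) L_{ia}(λ) − r_{ka,ij}(μ,λ) L_{al}(μ) + r_{al,ij}(μ,λ) L_{ka}(μ) ]. Then the spectral invariants are in involution: {Tr(L(λ)^p), Tr(L(μ)^q)} = 0 for all positive integers p, q and all parameter values λ, μ. -/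
section Aux
variable {B : Type*} [CommRing B]

lemma myderiv_zero (D : B → B) (hadd : ∀ x y, D (x + y) = D x + D y) : D 0 = 0 := by
  have h : D 0 = D 0 + D 0 := by simpa using hadd 0 0
  have h2 : D 0 + 0 = D 0 + D 0 := by rw [add_zero]; exact h
  exact (add_left_cancel h2).symm

lemma myderiv_sum {ι : Type*} (D : B → B) (hadd : ∀ x y, D (x + y) = D x + D y)
    (s : Finset ι) (f : ι → B) : D (∑ i ∈ s, f i) = ∑ i ∈ s, D (f i) := by
  classical
  induction s using Finset.induction_on with
  | empty => simpa using myderiv_zero D hadd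
  | insert _ _ h ih => rw [Finset.sum_insert h, hadd, ih, Finset.sum_insert h]
end Aux

section Aux2
variable {B : Type*} [CommRing B] {N : ℕ}

lemma myderiv_pow_entry (D : B → B) (hadd : ∀ x y, D (x + y) = D x + D y)
    (hmul : ∀ x y, D (x * y) = x * D y + y * D x)
    (M : Matrix (Fin N) (Fin N) B) :
    ∀ (p : ℕ) (i j : Fin N), D ((M ^ (p + 1)) i j) =
      ∑ s ∈ Finset.range (p + 1), ∑ a, ∑ b,
        (M ^ s) i a * D (M a b) * (M ^ (p - s)) b j := by
  intro p
  induction p with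
  | zero =>
      intro i j
      simp [Matrix.one_apply, mul_ite, ite_mul, Finset.sum_ite_eq, Finset.sum_ite_eq']
  | succ p ih =>
      intro i j
      have hpow : (M ^ (p + 2)) i j = ∑ c, (M ^ (p + 1)) i c * M c j := by
        rw [pow_succ, Matrix.mul_apply]
      rw [hpow, myderiv_sum D hadd]
      have step : ∀ c, D ((M ^ (p + 1)) i c * M c j)
          = (M ^ (p + 1)) i c * D (M c j)
            + ∑ s ∈ Finset.range (p + 1), ∑ a, ∑ b,
                (M ^ s) i a * D (M a b) * ((M ^ (p - s)) b c * M c j) := by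
        intro c
        rw [hmul, ih i c]
        congr 1
        rw [Finset.mul_sum]
        refine Finset.sum_congr rfl fun s _ => ?_
        rw [Finset.mul_sum]
        refine Finset.sum_congr rfl fun a _ => ?_
        rw [Finset.mul_sum]
        refine Finset.sum_congr rfl fun b _ => ?_
        ring
      have h1 : (∑ c, (M ^ (p + 1)) i c * D (M c j))
          = ∑ a, ∑ b, (M ^ (p + 1)) i a * D (M a b) * (M ^ (p + 1 - (p + 1))) b j := by
        simp only [Nat.sub_self, pow_zero, Matrix.one_apply, mul_ite, ite_mul, mul_one,
          mul_zero, zero_mul, Finset.sum_ite_eq', Finset.mem_univ, if_true]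
      have h2 : (∑ c, ∑ s ∈ Finset.range (p + 1), ∑ a, ∑ b,
            (M ^ s) i a * D (M a b) * ((M ^ (p - s)) b c * M c j))
          = ∑ s ∈ Finset.range (p + 1), ∑ a, ∑ b,
            (M ^ s) i a * D (M a b) * (M ^ (p + 1 - s)) b j := by
        rw [Finset.sum_comm]
        refine Finset.sum_congr rfl fun s hs => ?_
        rw [Finset.sum_comm]
        refine Finset.sum_congr rfl fun a _ => ?_
        rw [Finset.sum_comm]
        refine Finset.sum_congr rfl fun b _ => ?_
        have hs' : s ≤ p := Nat.lt_succ_iff.mp (Finset.mem_range.mp hs)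
        have he : (M ^ (p + 1 - s)) b j = ∑ c, (M ^ (p - s)) b c * M c j := by
          have h3 : p + 1 - s = (p - s) + 1 := by omega
          rw [h3, pow_succ, Matrix.mul_apply]
        rw [he, Finset.mul_sum]
      calc (∑ c, D ((M ^ (p + 1)) i c * M c j))
          = (∑ c, (M ^ (p + 1)) i c * D (M c j))
            + ∑ c, ∑ s ∈ Finset.range (p + 1), ∑ a, ∑ b,
                (M ^ s) i a * D (M a b) * ((M ^ (p - s)) b c * M c j) := by
            rw [Finset.sum_congr rfl fun c _ => step c, Finset.sum_add_distrib]
        _ = _ := by rw [h1, h2, Finset.sum_range_succ (n := p + 1), add_comm]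

lemma myderiv_trace_pow (D : B → B) (hadd : ∀ x y, D (x + y) = D x + D y)
    (hmul : ∀ x y, D (x * y) = x * D y + y * D x)
    (M : Matrix (Fin N) (Fin N) B) (p : ℕ) :
    D (Matrix.trace (M ^ (p + 1))) =
      ∑ _s ∈ Finset.range (p + 1), ∑ a, ∑ b, (M ^ p) b a * D (M a b) := by
  have htr : Matrix.trace (M ^ (p + 1)) = ∑ i, (M ^ (p + 1)) i i := rfl
  rw [htr, myderiv_sum D hadd]
  simp only [myderiv_pow_entry D hadd hmul M p]
  rw [Finset.sum_comm]
  refine Finset.sum_congr rfl fun s hs => ?_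
  rw [Finset.sum_comm]
  refine Finset.sum_congr rfl fun a _ => ?_
  rw [Finset.sum_comm]
  refine Finset.sum_congr rfl fun b _ => ?_
  have hs' : s ≤ p := Nat.lt_succ_iff.mp (Finset.mem_range.mp hs)
  have hP : (M ^ p) b a = ∑ i, (M ^ (p - s)) b i * (M ^ s) i a := by
    have h1 : p = (p - s) + s := by omega
    rw [h1, pow_add, Matrix.mul_apply]
    simp only [Nat.add_sub_cancel]
  rw [hP, Finset.sum_mul]
  refine Finset.sum_congr rfl fun i _ => ?_
  ring

end Aux2

/-- if the entries of the Lax matrices `L(λ)`, `L(μ)` satisfy the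
componentwise linear `r`-matrix relation
`{L_{ij}(λ), L_{kl}(μ)} = ∑ₐ ( r_{ia,kl}(λ,μ) L_{aj}(λ) − r_{aj,kl}(λ,μ) L_{ia}(λ)
  − r_{ka,ij}(μ,λ) L_{al}(μ) + r_{al,ij}(μ,λ) L_{ka}(μ) )`,
then the spectral invariants are in involution:
`{Tr(L(λ)^p), Tr(L(μ)^q)} = 0` for all `p, q ≥ 1`. -/
theorem spectral_invariants_in_involution {B : Type*} [CommRing B]
    (N : ℕ) {Λ : Type*} (pb : B → B → B)
    (hadd₁ : ∀ x y z : B, pb (x + y) z = pb x z + pb y z)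
    (hadd₂ : ∀ x y z : B, pb x (y + z) = pb x y + pb x z)
    (hleib₁ : ∀ x y z : B, pb (x * y) z = x * pb y z + y * pb x z)
    (hleib₂ : ∀ x y z : B, pb x (y * z) = y * pb x z + z * pb x y)
    (L : Λ → Matrix (Fin N) (Fin N) B)
    (r : Λ → Λ → Fin N → Fin N → Fin N → Fin N → B)  -- `r lam mu a b c d = r_{ab,cd}(lam,mu)`
    (hrel : ∀ (lam mu : Λ) (i j k l : Fin N),
      pb (L lam i j) (L mu k l) =
        ∑ a, (r lam mu i a k l * L lam a j - r lam mu a j k l * L lam i a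
            - r mu lam k a i j * L mu a l + r mu lam a l i j * L mu k a)) :
    ∀ (lam mu : Λ) (p q : ℕ), 1 ≤ p → 1 ≤ q →
      pb (Matrix.trace (L lam ^ p)) (Matrix.trace (L mu ^ q)) = 0 := by
  intro lam mu p q hp hq
  obtain ⟨p', rfl⟩ : ∃ p', p = p' + 1 := ⟨p - 1, by omega⟩
  obtain ⟨q', rfl⟩ : ∃ q', q = q' + 1 := ⟨q - 1, by omega⟩
  -- sum manipulation helpers
  have push3 : ∀ (f : Fin N → Fin N → Fin N → B),
      (∑ c, ∑ d, ∑ e, f c d e) = ∑ d, ∑ e, ∑ c, f c d e := by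
    intro f
    rw [Finset.sum_comm]
    exact Finset.sum_congr rfl fun d _ => Finset.sum_comm
  have push4 : ∀ (f : Fin N → Fin N → Fin N → Fin N → B),
      (∑ b, ∑ c, ∑ d, ∑ e, f b c d e) = ∑ c, ∑ d, ∑ e, ∑ b, f b c d e := by
    intro f
    rw [Finset.sum_comm]
    refine Finset.sum_congr rfl fun c _ => ?_
    rw [Finset.sum_comm]
    exact Finset.sum_congr rfl fun d _ => Finset.sum_comm
  have push5 : ∀ (f : Fin N → Fin N → Fin N → Fin N → Fin N → B),
      (∑ a, ∑ b, ∑ c, ∑ d, ∑ e, f a b c d e)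
        = ∑ b, ∑ c, ∑ d, ∑ e, ∑ a, f a b c d e := by
    intro f
    rw [Finset.sum_comm]
    refine Finset.sum_congr rfl fun b _ => ?_
    rw [Finset.sum_comm]
    refine Finset.sum_congr rfl fun c _ => ?_
    rw [Finset.sum_comm]
    exact Finset.sum_congr rfl fun d _ => Finset.sum_comm
  have swap14 : ∀ (F : Fin N → Fin N → Fin N → Fin N → B),
      (∑ a, ∑ c, ∑ d, ∑ e, F a c d e) = ∑ a, ∑ c, ∑ d, ∑ e, F e c d a := by
    intro F
    calc (∑ a, ∑ c, ∑ d, ∑ e, F a c d e)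
        = ∑ a, ∑ c, ∑ e, ∑ d, F a c d e := by
          exact Finset.sum_congr rfl fun a _ => Finset.sum_congr rfl fun c _ => Finset.sum_comm
      _ = ∑ a, ∑ e, ∑ c, ∑ d, F a c d e := by
          exact Finset.sum_congr rfl fun a _ => Finset.sum_comm
      _ = ∑ e, ∑ a, ∑ c, ∑ d, F a c d e := Finset.sum_comm
      _ = ∑ e, ∑ c, ∑ a, ∑ d, F a c d e := by
          exact Finset.sum_congr rfl fun e _ => Finset.sum_comm
      _ = ∑ e, ∑ c, ∑ d, ∑ a, F a c d e := by
          exact Finset.sum_congr rfl fun e _ => Finset.sum_congr rfl fun c _ => Finset.sum_comm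
  -- the two derivation steps
  have hD1 : pb (Matrix.trace (L lam ^ (p' + 1))) (Matrix.trace (L mu ^ (q' + 1)))
      = ∑ _s ∈ Finset.range (p' + 1), ∑ a, ∑ b,
          (L lam ^ p') b a * pb (L lam a b) (Matrix.trace (L mu ^ (q' + 1))) := by
    have := myderiv_trace_pow (fun x => pb x (Matrix.trace (L mu ^ (q' + 1))))
      (fun x y => hadd₁ x y _) (fun x y => hleib₁ x y _) (L lam) p'
    simpa using this
  have hD2 : ∀ a b : Fin N, pb (L lam a b) (Matrix.trace (L mu ^ (q' + 1)))
      = ∑ _t ∈ Finset.range (q' + 1), ∑ c, ∑ d,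
          (L mu ^ q') d c * pb (L lam a b) (L mu c d) := fun a b =>
    myderiv_trace_pow (pb (L lam a b)) (hadd₂ (L lam a b)) (hleib₂ (L lam a b)) (L mu) q'
  -- the key cancellation
  have key : (∑ a, ∑ b, (L lam ^ p') b a *
      ∑ c, ∑ d, (L mu ^ q') d c * pb (L lam a b) (L mu c d)) = 0 := by
    simp only [hrel, Finset.mul_sum, mul_sub, mul_add, Finset.sum_sub_distrib,
      Finset.sum_add_distrib]
    have c1 : (∑ a, ∑ b, ∑ c, ∑ d, ∑ e,
          (L lam ^ p') b a * ((L mu ^ q') d c * (r lam mu a e c d * L lam e b)))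
        = ∑ a, ∑ c, ∑ d, ∑ e,
          r lam mu a e c d * (L mu ^ q') d c * (L lam ^ (p' + 1)) e a := by
      refine Finset.sum_congr rfl fun a _ => ?_
      rw [push4 _]
      refine Finset.sum_congr rfl fun c _ => Finset.sum_congr rfl fun d _ =>
        Finset.sum_congr rfl fun e _ => ?_
      have hP : (L lam ^ (p' + 1)) e a = ∑ b, L lam e b * (L lam ^ p') b a := by
        rw [pow_succ', Matrix.mul_apply]
      rw [hP, Finset.mul_sum]
      exact Finset.sum_congr rfl fun b _ => by ring
    have c2 : (∑ a, ∑ b, ∑ c, ∑ d, ∑ e,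
          (L lam ^ p') b a * ((L mu ^ q') d c * (r lam mu e b c d * L lam a e)))
        = ∑ b, ∑ c, ∑ d, ∑ e,
          r lam mu e b c d * (L mu ^ q') d c * (L lam ^ (p' + 1)) b e := by
      rw [push5 _]
      refine Finset.sum_congr rfl fun b _ => Finset.sum_congr rfl fun c _ =>
        Finset.sum_congr rfl fun d _ => Finset.sum_congr rfl fun e _ => ?_
      have hP : (L lam ^ (p' + 1)) b e = ∑ a, (L lam ^ p') b a * L lam a e := by
        rw [pow_succ, Matrix.mul_apply]
      rw [hP, Finset.mul_sum]
      exact Finset.sum_congr rfl fun a _ => by ring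
    have h12 : (∑ a, ∑ b, ∑ c, ∑ d, ∑ e,
          (L lam ^ p') b a * ((L mu ^ q') d c * (r lam mu a e c d * L lam e b)))
        = ∑ a, ∑ b, ∑ c, ∑ d, ∑ e,
          (L lam ^ p') b a * ((L mu ^ q') d c * (r lam mu e b c d * L lam a e)) := by
      rw [c1, c2, swap14 _]
    have c3 : (∑ a, ∑ b, ∑ c, ∑ d, ∑ e,
          (L lam ^ p') b a * ((L mu ^ q') d c * (r mu lam c e a b * L mu e d)))
        = ∑ a, ∑ b, ∑ c, ∑ e,
          (L lam ^ p') b a * r mu lam c e a b * (L mu ^ (q' + 1)) e c := by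
      refine Finset.sum_congr rfl fun a _ => Finset.sum_congr rfl fun b _ =>
        Finset.sum_congr rfl fun c _ => ?_
      rw [Finset.sum_comm]
      refine Finset.sum_congr rfl fun e _ => ?_
      have hQ : (L mu ^ (q' + 1)) e c = ∑ d, L mu e d * (L mu ^ q') d c := by
        rw [pow_succ', Matrix.mul_apply]
      rw [hQ, Finset.mul_sum]
      exact Finset.sum_congr rfl fun d _ => by ring
    have c4 : (∑ a, ∑ b, ∑ c, ∑ d, ∑ e,
          (L lam ^ p') b a * ((L mu ^ q') d c * (r mu lam e d a b * L mu c e)))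
        = ∑ a, ∑ b, ∑ d, ∑ e,
          (L lam ^ p') b a * r mu lam e d a b * (L mu ^ (q' + 1)) d e := by
      refine Finset.sum_congr rfl fun a _ => Finset.sum_congr rfl fun b _ => ?_
      rw [push3 _]
      refine Finset.sum_congr rfl fun d _ => Finset.sum_congr rfl fun e _ => ?_
      have hQ : (L mu ^ (q' + 1)) d e = ∑ c, (L mu ^ q') d c * L mu c e := by
        rw [pow_succ, Matrix.mul_apply]
      rw [hQ, Finset.mul_sum]
      exact Finset.sum_congr rfl fun c _ => by ring
    have h34 : (∑ a, ∑ b, ∑ c, ∑ d, ∑ e,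
          (L lam ^ p') b a * ((L mu ^ q') d c * (r mu lam c e a b * L mu e d)))
        = ∑ a, ∑ b, ∑ c, ∑ d, ∑ e,
          (L lam ^ p') b a * ((L mu ^ q') d c * (r mu lam e d a b * L mu c e)) := by
      rw [c3, c4]
      exact Finset.sum_congr rfl fun a _ => Finset.sum_congr rfl fun b _ => Finset.sum_comm
    rw [h12, h34]
    ring
  rw [hD1]
  refine Finset.sum_eq_zero fun s _ => ?_
  calc (∑ a, ∑ b, (L lam ^ p') b a * pb (L lam a b) (Matrix.trace (L mu ^ (q' + 1))))
      = ∑ a, ∑ b, ∑ _t ∈ Finset.range (q' + 1),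
          (L lam ^ p') b a * ∑ c, ∑ d, (L mu ^ q') d c * pb (L lam a b) (L mu c d) := by
        refine Finset.sum_congr rfl fun a _ => Finset.sum_congr rfl fun b _ => ?_
        rw [hD2 a b, Finset.mul_sum]
    _ = ∑ a, ∑ _t ∈ Finset.range (q' + 1), ∑ b,
          (L lam ^ p') b a * ∑ c, ∑ d, (L mu ^ q') d c * pb (L lam a b) (L mu c d) := by
        exact Finset.sum_congr rfl fun a _ => Finset.sum_comm
    _ = ∑ _t ∈ Finset.range (q' + 1), ∑ a, ∑ b,
          (L lam ^ p') b a * ∑ c, ∑ d, (L mu ^ q') d c * pb (L lam a b) (L mu c d) :=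
        Finset.sum_comm
    _ = 0 := Finset.sum_eq_zero fun t _ => key
end

section
/- Let r(λ−μ) be a unitary non-dynamical r-matrix (r_{12}(λ,μ) = r(λ−μ) = −r_{21}(μ,λ)). Then the Sklyanin quadratic bracket {L(λ) ⊗ 1, 1 ⊗ L(μ)} = [r(λ−μ), L(λ) ⊗ L(μ)] is equivalent to the linear r-matrix relation {L(λ)⊗1, 1⊗L(μ)} = [R_{12}(λ,μ), L(λ)⊗1] − [R_{21}(μ,λ), 1⊗L(μ)] with the dynamical r-matrix R_{12}(λ,μ) = ½( r(λ−μ)(1 ⊗ L(μ)) + (1 ⊗ L(μ)) r(λ−μ) ); i.e., the right-hand sides of the two relations are equal as matrix identities. -/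
open Kronecker

/-- Conjugation by the flip operator `Π`: `(Π X Π)_{(i,k),(j,l)} = X_{(k,i),(l,j)}`. -/
def flipConj {R : Type*} (N : ℕ)
    (A : Matrix (Fin N × Fin N) (Fin N × Fin N) R) :
    Matrix (Fin N × Fin N) (Fin N × Fin N) R :=
  fun p q => A (p.2, p.1) (q.2, q.1)

/-- The dynamical `r`-matrix
`R₁₂(λ,μ) = ½ ( r(λ−μ)(1 ⊗ L(μ)) + (1 ⊗ L(μ)) r(λ−μ) )`. -/
noncomputable def R12 {R : Type*} [CommRing R] [Invertible (2 : R)] (N : ℕ)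
    {Λ : Type*} [AddCommGroup Λ]
    (r : Λ → Matrix (Fin N × Fin N) (Fin N × Fin N) R)
    (L : Λ → Matrix (Fin N) (Fin N) R) (lam mu : Λ) :
    Matrix (Fin N × Fin N) (Fin N × Fin N) R :=
  (⅟(2 : R)) • (r (lam - mu) * ((1 : Matrix (Fin N) (Fin N) R) ⊗ₖ L mu)
    + ((1 : Matrix (Fin N) (Fin N) R) ⊗ₖ L mu) * r (lam - mu))

lemma flipConj_eq_submatrix {R : Type*} (N : ℕ)
    (A : Matrix (Fin N × Fin N) (Fin N × Fin N) R) :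
    flipConj N A = A.submatrix (Equiv.prodComm (Fin N) (Fin N))
      (Equiv.prodComm (Fin N) (Fin N)) := rfl

lemma flipConj_mul {R : Type*} [CommRing R] (N : ℕ)
    (A B : Matrix (Fin N × Fin N) (Fin N × Fin N) R) :
    flipConj N (A * B) = flipConj N A * flipConj N B := by
  rw [flipConj_eq_submatrix, flipConj_eq_submatrix, flipConj_eq_submatrix,
    Matrix.submatrix_mul_equiv]

lemma flipConj_add {R : Type*} [CommRing R] (N : ℕ)
    (A B : Matrix (Fin N × Fin N) (Fin N × Fin N) R) :
    flipConj N (A + B) = flipConj N A + flipConj N B := rfl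

lemma flipConj_smul {R : Type*} [CommRing R] (N : ℕ) (c : R)
    (A : Matrix (Fin N × Fin N) (Fin N × Fin N) R) :
    flipConj N (c • A) = c • flipConj N A := rfl

lemma flipConj_kron {R : Type*} [CommRing R] (N : ℕ)
    (A B : Matrix (Fin N) (Fin N) R) :
    flipConj N (A ⊗ₖ B) = B ⊗ₖ A := by
  ext ⟨i,k⟩ ⟨j,l⟩
  simp [flipConj, Matrix.kroneckerMap_apply, mul_comm]

lemma key {R : Type*} [CommRing R] [Invertible (2:R)] {M : Type*} [Ring M] [Algebra R M]
    (a b c : M) (hab : a * b = b * a) :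
    ((⅟(2:R)) • (c*a + a*c) * b - b * ((⅟(2:R)) • (c*a + a*c)))
      + ((⅟(2:R)) • (c*b + b*c) * a - a * ((⅟(2:R)) • (c*b + b*c)))
      = c * (a*b) - (a*b) * c := by
  have cancel : ∀ x y : M, (2:R) • x = (2:R) • y → x = y := by
    intro x y h
    have h2 := congrArg (fun z => (⅟(2:R)) • z) h
    simpa [smul_smul] using h2
  apply cancel
  simp only [smul_mul_assoc, mul_smul_comm, ← smul_sub, ← smul_add, smul_smul,
    mul_invOf_self, one_smul, two_smul]
  simp only [mul_add, add_mul, mul_assoc]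
  rw [show b*(a*c) = a*(b*c) by rw [← mul_assoc, ← hab, mul_assoc],
      show c*(b*a) = c*(a*b) by rw [← hab]]
  abel

/-- for a unitary non-dynamical `r`-matrix (`Π r(ν) Π = −r(−ν)`), the
right-hand side of the Sklyanin quadratic relation, `[r(λ−μ), L(λ) ⊗ L(μ)]`,
equals the right-hand side of the linear relation
`[R₁₂(λ,μ), L(λ) ⊗ 1] − [R₂₁(μ,λ), 1 ⊗ L(μ)]`, where `R₂₁(μ,λ) = Π R₁₂(μ,λ) Π`
and `R₁₂(λ,μ) = ½( r(λ−μ)(1 ⊗ L(μ)) + (1 ⊗ L(μ)) r(λ−μ) )`. -/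
theorem sklyanin_as_linear_rmatrix {R : Type*} [CommRing R] [Invertible (2 : R)]
    (N : ℕ) {Λ : Type*} [AddCommGroup Λ]
    (r : Λ → Matrix (Fin N × Fin N) (Fin N × Fin N) R)
    (hunit : ∀ ν : Λ, flipConj N (r ν) = -r (-ν))
    (L : Λ → Matrix (Fin N) (Fin N) R) (lam mu : Λ) :
    r (lam - mu) * (L lam ⊗ₖ L mu) - (L lam ⊗ₖ L mu) * r (lam - mu)
      = (R12 N r L lam mu * (L lam ⊗ₖ (1 : Matrix (Fin N) (Fin N) R))
          - (L lam ⊗ₖ (1 : Matrix (Fin N) (Fin N) R)) * R12 N r L lam mu)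
        - (flipConj N (R12 N r L mu lam) * ((1 : Matrix (Fin N) (Fin N) R) ⊗ₖ L mu)
          - ((1 : Matrix (Fin N) (Fin N) R) ⊗ₖ L mu) * flipConj N (R12 N r L mu lam)) := by
  set a : Matrix (Fin N × Fin N) (Fin N × Fin N) R :=
    (1 : Matrix (Fin N) (Fin N) R) ⊗ₖ L mu with ha
  set b : Matrix (Fin N × Fin N) (Fin N × Fin N) R :=
    L lam ⊗ₖ (1 : Matrix (Fin N) (Fin N) R) with hb
  set c : Matrix (Fin N × Fin N) (Fin N × Fin N) R := r (lam - mu) with hc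
  have hab : a * b = b * a := by
    rw [ha, hb, ← Matrix.mul_kronecker_mul, ← Matrix.mul_kronecker_mul]
    simp
  have hLL : L lam ⊗ₖ L mu = a * b := by
    rw [ha, hb, ← Matrix.mul_kronecker_mul]; simp
  have hR : R12 N r L lam mu = (⅟(2:R)) • (c * a + a * c) := rfl
  have hflip : flipConj N (R12 N r L mu lam)
      = -((⅟(2:R)) • (c * b + b * c)) := by
    rw [R12, flipConj_smul, flipConj_add, flipConj_mul, flipConj_mul, flipConj_kron,
      hunit (mu - lam), neg_sub, ← hc, ← hb]
    simp [neg_add, smul_add]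
    abel
  rw [hLL, ← key (R := R) a b c hab, hR, hflip]
  simp only [neg_mul, mul_neg, sub_neg_eq_add]
  abel
end

section
/- Let B be a Poisson algebra and X_1,...,X_M, Y_1,...,Y_M ∈ B with {X_α, Y_β}_B = Σ_γ g^β_γ F^{αγ}(X) + Σ_γ h^α_γ F^{γβ}(Y) for coefficients g^β_γ, h^α_γ ∈ B and fixed polynomials F^{αβ}. If P and Q are polynomials with Σ_α (∂P/∂x_α)(x) F^{αγ}(x) = 0 and Σ_β (∂Q/∂x_β)(x) F^{γβ}(x) = 0 identically for all γ, then {P(X_1,...,X_M), Q(Y_1,...,Y_M)}_B = 0. -/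
open MvPolynomial

set_option linter.unnecessarySeqFocus false in
lemma chain_aux {B : Type*} [CommRing B] [Algebra ℝ B] {M : ℕ} (pb : B → B → B)
    (hadd : ∀ x y z : B, pb (x + y) z = pb x z + pb y z)
    (hleib : ∀ x y z : B, pb (x * y) z = x * pb y z + y * pb x z)
    (hsmul : ∀ (t : ℝ) (x y : B), pb (t • x) y = t • pb x y)
    (Xv : Fin M → B) (y : B) (P : MvPolynomial (Fin M) ℝ) :
    pb (aeval Xv P) y = ∑ α, aeval Xv (pderiv α P) * pb (Xv α) y := by
  have h1 : pb (1 : B) y = 0 := by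
    have := hleib 1 1 y
    simp at this
    linear_combination this
  induction P using MvPolynomial.induction_on with
  | C r =>
      have : (aeval Xv (C r : MvPolynomial (Fin M) ℝ)) = r • (1 : B) := by
        simp [Algebra.algebraMap_eq_smul_one]
      rw [this, hsmul, h1]
      simp
  | add p q hp hq =>
      simp [map_add, hadd, hp, hq, Finset.sum_add_distrib, add_mul]
  | mul_X p n hp =>
      rw [map_mul, aeval_X, hleib, hp]
      have : ∀ α : Fin M, aeval Xv (pderiv α (p * X n)) * pb (Xv α) y
          = aeval Xv (pderiv α p) * Xv n * pb (Xv α) y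
            + (if n = α then aeval Xv p * pb (Xv α) y else 0) := by
        intro α
        rw [pderiv_mul, pderiv_X]
        by_cases hna : n = α <;> simp [Pi.single_apply, hna] <;> ring
      rw [Finset.sum_congr rfl fun α _ => this α, Finset.sum_add_distrib,
        Finset.sum_ite_eq]
      simp [Finset.mul_sum]
      ring_nf

/-- if `{X α, Y β}_B = ∑ γ g^β_γ F^{αγ}(X) + ∑ γ h^α_γ F^{γβ}(Y)`
for fixed polynomials `F^{αβ}` and coefficients `g^β_γ, h^α_γ ∈ B`, and `P`, `Q`
are polynomials with `∑ α (∂P/∂x_α) F^{αγ} = 0` and `∑ β (∂Q/∂x_β) F^{γβ} = 0`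
identically for all `γ`, then `{P(X₁,…,X_M), Q(Y₁,…,Y_M)}_B = 0`. -/
theorem polynomial_casimirs_in_involution {B : Type*} [CommRing B] [Algebra ℝ B]
    (M : ℕ) (pb : B → B → B)
    (hadd₁ : ∀ x y z : B, pb (x + y) z = pb x z + pb y z)
    (hadd₂ : ∀ x y z : B, pb x (y + z) = pb x y + pb x z)
    (hleib₁ : ∀ x y z : B, pb (x * y) z = x * pb y z + y * pb x z)
    (hleib₂ : ∀ x y z : B, pb x (y * z) = y * pb x z + z * pb x y)
    (hsmul₁ : ∀ (t : ℝ) (x y : B), pb (t • x) y = t • pb x y)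
    (hsmul₂ : ∀ (t : ℝ) (x y : B), pb x (t • y) = t • pb x y)
    (F : Fin M → Fin M → MvPolynomial (Fin M) ℝ)
    (X Y : Fin M → B) (g h : Fin M → Fin M → B)
    (hXY : ∀ α β, pb (X α) (Y β)
      = (∑ γ, g β γ * aeval X (F α γ)) + (∑ γ, h α γ * aeval Y (F γ β)))
    (P Q : MvPolynomial (Fin M) ℝ)
    (hP : ∀ γ, ∑ α, pderiv α P * F α γ = 0)
    (hQ : ∀ γ, ∑ β, pderiv β Q * F γ β = 0) :
    pb (aeval X P) (aeval Y Q) = 0 := by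
  have keyP : ∀ γ, ∑ α, aeval X (pderiv α P) * aeval X (F α γ) = 0 := by
    intro γ
    have : (aeval X (∑ α, pderiv α P * F α γ) : B) = 0 := by rw [hP]; simp
    simpa [map_sum, map_mul] using this
  have keyQ : ∀ γ, ∑ β, aeval Y (pderiv β Q) * aeval Y (F γ β) = 0 := by
    intro γ
    have : (aeval Y (∑ β, pderiv β Q * F γ β) : B) = 0 := by rw [hQ]; simp
    simpa [map_sum, map_mul] using this
  have swap : ∀ x : B, ∀ Qp : MvPolynomial (Fin M) ℝ,
      pb x (aeval Y Qp) = ∑ β, aeval Y (pderiv β Qp) * pb x (Y β) := by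
    intro x Qp
    exact chain_aux (fun a b => pb b a)
      (fun a b c => hadd₂ c a b) (fun a b c => hleib₂ c a b)
      (fun t a b => hsmul₂ t b a) Y x Qp
  rw [chain_aux pb hadd₁ hleib₁ hsmul₁ X _ P]
  have step : ∀ α, aeval X (pderiv α P) * pb (X α) (aeval Y Q)
      = ∑ β, aeval X (pderiv α P) * aeval Y (pderiv β Q) * pb (X α) (Y β) := by
    intro α
    rw [swap, Finset.mul_sum]
    exact Finset.sum_congr rfl fun β _ => by ring
  rw [Finset.sum_congr rfl fun α _ => step α]
  have expand : ∀ α β, aeval X (pderiv α P) * aeval Y (pderiv β Q) * pb (X α) (Y β)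
      = (∑ γ, (aeval Y (pderiv β Q) * g β γ) * (aeval X (pderiv α P) * aeval X (F α γ)))
        + (∑ γ, (aeval X (pderiv α P) * h α γ) * (aeval Y (pderiv β Q) * aeval Y (F γ β))) := by
    intro α β
    rw [hXY, mul_add, Finset.mul_sum, Finset.mul_sum]
    congr 1 <;> exact Finset.sum_congr rfl fun γ _ => by ring
  rw [Finset.sum_congr rfl fun α _ => Finset.sum_congr rfl fun β _ => expand α β]
  rw [Finset.sum_congr rfl fun α _ => Finset.sum_add_distrib, Finset.sum_add_distrib]
  have t1 : (∑ α, ∑ β, ∑ γ, (aeval Y (pderiv β Q) * g β γ) *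
      (aeval X (pderiv α P) * aeval X (F α γ))) = 0 := by
    rw [Finset.sum_comm]
    refine Finset.sum_eq_zero fun β _ => ?_
    rw [Finset.sum_comm]
    refine Finset.sum_eq_zero fun γ _ => ?_
    rw [← Finset.mul_sum, keyP, mul_zero]
  have t2 : (∑ α, ∑ β, ∑ γ, (aeval X (pderiv α P) * h α γ) *
      (aeval Y (pderiv β Q) * aeval Y (F γ β))) = 0 := by
    refine Finset.sum_eq_zero fun α _ => ?_
    rw [Finset.sum_comm]
    refine Finset.sum_eq_zero fun γ _ => ?_
    rw [← Finset.mul_sum, keyQ, mul_zero]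
  rw [t1, t2, add_zero]
end

section
/- Let A = F(gl(N)*) with bracket {e_{ij}, e_{kl}} = δ_{jk} e_{il} − δ_{il} e_{kj}, B a Poisson algebra, and Δ_λ : A → B defined on generators by Δ_λ(e_{ij}) = L_{ij}(λ) and extended functorially. If L(λ) satisfies the linear r-matrix relation of Babelon–Viallet with (possibly dynamical) r-matrix r_{12}(λ,μ), then the maps Δ_λ satisfy the loop-coproduct condition (p2) with g^{kl}_{ab} = −r_{ba,kl}(λ,μ) and h^{ij}_{ab} = −r_{ba,ij}(μ,λ), and consequently {Δ_λ(C_p), Δ_μ(C_q)}_B = {Tr(L(λ)^p), Tr(L(μ)^q)}_B = 0 for all p, q = 1,...,N. -/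
/-- let `Δ_λ(e_{ij}) = L_{ij}(λ)`. If `L(λ)` satisfies the
(componentwise) Babelon–Viallet linear `r`-matrix relation with a possibly
dynamical `r`-matrix, then the maps `Δ_λ` satisfy the loop-coproduct condition
(p2) with respect to the gl(N) structure functions
`F^{(ij)(kl)}(y) = δ_{jk} y_{il} − δ_{il} y_{kj}`, with the choices
`g^{kl}_{ab} = −r_{ba,kl}(λ,μ)` and `h^{ij}_{ab} = −r_{ba,ij}(μ,λ)`, and
consequently `{Δ_λ(C_p), Δ_μ(C_q)} = {Tr(L(λ)^p), Tr(L(μ)^q)} = 0` for all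
`p, q = 1, …, N`. -/
theorem gl_loop_coproduct_from_rmatrix {B : Type*} [CommRing B]
    (N : ℕ) {Λ : Type*} (pb : B → B → B)
    (hadd₁ : ∀ x y z : B, pb (x + y) z = pb x z + pb y z)
    (hadd₂ : ∀ x y z : B, pb x (y + z) = pb x y + pb x z)
    (hleib₁ : ∀ x y z : B, pb (x * y) z = x * pb y z + y * pb x z)
    (hleib₂ : ∀ x y z : B, pb x (y * z) = y * pb x z + z * pb x y)
    (L : Λ → Matrix (Fin N) (Fin N) B)
    (r : Λ → Λ → Fin N → Fin N → Fin N → Fin N → B)  -- `r lam mu a b c d = r_{ab,cd}(lam,mu)`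
    (lam mu : Λ)
    (hBV : ∀ i j k l : Fin N,
      pb (L lam i j) (L mu k l) =
        ∑ a, (r lam mu i a k l * L lam a j - r lam mu a j k l * L lam i a
            - r mu lam k a i j * L mu a l + r mu lam a l i j * L mu k a)) :
    (∀ i j k l : Fin N,
      pb (L lam i j) (L mu k l) =
        (∑ a, ∑ b, (-(r lam mu b a k l)) *
          ((if j = a then L lam i b else 0) - (if i = b then L lam a j else 0)))
        + (∑ a, ∑ b, (-(r mu lam b a i j)) *
          ((if b = k then L mu a l else 0) - (if a = l then L mu k b else 0)))) ∧
    (∀ p q : ℕ, 1 ≤ p → p ≤ N → 1 ≤ q → q ≤ N →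
      pb (Matrix.trace (L lam ^ p)) (Matrix.trace (L mu ^ q)) = 0) := by
  constructor
  · intro i j k l
    rw [hBV]
    simp only [mul_sub, mul_ite, mul_zero, mul_one, Finset.sum_sub_distrib,
      Finset.sum_ite_eq, Finset.sum_ite_eq', Finset.mem_univ, if_true,
      Finset.sum_add_distrib, neg_mul, Finset.sum_ite_irrel, Finset.sum_const_zero]
    simp only [Finset.sum_neg_distrib]
    ring
  · -- basic facts
    have pbz₁ : ∀ x : B, pb 0 x = 0 := by
      intro x
      have := hadd₁ 0 0 x
      simp at this
      exact this
    have pbz₂ : ∀ x : B, pb x 0 = 0 := by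
      intro x
      have := hadd₂ x 0 0
      simp at this
      exact this
    have pbone₁ : ∀ x : B, pb 1 x = 0 := by
      intro x
      have := hleib₁ 1 1 x
      simp at this
      exact this
    have pbone₂ : ∀ x : B, pb x 1 = 0 := by
      intro x
      have := hleib₂ x 1 1
      simp at this
      exact this
    have psum₁ : ∀ {ι : Type} (s : Finset ι) (f : ι → B) (x : B),
        pb (∑ i ∈ s, f i) x = ∑ i ∈ s, pb (f i) x := by
      intro ι s f x
      induction s using Finset.cons_induction with
      | empty => simpa using pbz₁ x
      | cons i s hi ih => simp [Finset.sum_cons, hadd₁, ih]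
    have psum₂ : ∀ {ι : Type} (s : Finset ι) (f : ι → B) (x : B),
        pb x (∑ i ∈ s, f i) = ∑ i ∈ s, pb x (f i) := by
      intro ι s f x
      induction s using Finset.cons_induction with
      | empty => simpa using pbz₂ x
      | cons i s hi ih => simp [Finset.sum_cons, hadd₂, ih]
    -- entrywise derivative of powers, first slot
    have d1 : ∀ (n : ℕ) (i j : Fin N) (x : B),
        pb ((L lam ^ n) i j) x
          = ∑ s ∈ Finset.range n, ∑ a, ∑ b,
              (L lam ^ s) i a * (L lam ^ (n - 1 - s)) b j * pb (L lam a b) x := by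
      intro n
      induction n with
      | zero =>
        intro i j x
        simp only [pow_zero, Matrix.one_apply, Finset.range_zero, Finset.sum_empty]
        split <;> simp [pbz₁, pbone₁]
      | succ n ih =>
        intro i j x
        rw [pow_succ', Matrix.mul_apply, psum₁]
        rw [Finset.sum_range_succ']
        have hf0 : (∑ a, ∑ b, (L lam ^ 0) i a * (L lam ^ (n + 1 - 1 - 0)) b j * pb (L lam a b) x)
            = ∑ b, (L lam ^ n) b j * pb (L lam i b) x := by
          simp [pow_zero, Matrix.one_apply, Finset.sum_ite_eq, mul_comm]
        have hexp : ∀ s : ℕ, n + 1 - 1 - (s + 1) = n - 1 - s := fun s => by omega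
        simp only [hleib₁, Finset.sum_add_distrib]
        congr 1
        · calc ∑ k, L lam i k * pb ((L lam ^ n) k j) x
              = ∑ k, ∑ s ∈ Finset.range n, ∑ a, ∑ b,
                  L lam i k * ((L lam ^ s) k a * (L lam ^ (n-1-s)) b j * pb (L lam a b) x) := by
                simp only [ih, Finset.mul_sum]
            _ = ∑ s ∈ Finset.range n, ∑ a, ∑ b, ∑ k,
                  L lam i k * ((L lam ^ s) k a * (L lam ^ (n-1-s)) b j * pb (L lam a b) x) := by
                rw [Finset.sum_comm]
                refine Finset.sum_congr rfl fun s _ => ?_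
                rw [Finset.sum_comm]
                refine Finset.sum_congr rfl fun a _ => ?_
                rw [Finset.sum_comm]
            _ = ∑ s ∈ Finset.range n, ∑ a, ∑ b,
                  (L lam ^ (s+1)) i a * (L lam ^ (n-1-s)) b j * pb (L lam a b) x := by
                refine Finset.sum_congr rfl fun s _ => Finset.sum_congr rfl fun a _ =>
                  Finset.sum_congr rfl fun b _ => ?_
                rw [pow_succ', Matrix.mul_apply, Finset.sum_mul, Finset.sum_mul]
                exact Finset.sum_congr rfl fun k _ => by ring
            _ = ∑ s ∈ Finset.range n, ∑ a, ∑ b,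
                  (L lam ^ (s+1)) i a * (L lam ^ (n+1-1-(s+1))) b j * pb (L lam a b) x := by
                simp only [hexp]
        · exact hf0.symm
    -- entrywise derivative of powers, second slot
    have d2 : ∀ (n : ℕ) (i j : Fin N) (x : B),
        pb x ((L mu ^ n) i j)
          = ∑ s ∈ Finset.range n, ∑ a, ∑ b,
              (L mu ^ s) i a * (L mu ^ (n - 1 - s)) b j * pb x (L mu a b) := by
      intro n
      induction n with
      | zero =>
        intro i j x
        simp only [pow_zero, Matrix.one_apply, Finset.range_zero, Finset.sum_empty]
        split <;> simp [pbz₂, pbone₂]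
      | succ n ih =>
        intro i j x
        rw [pow_succ', Matrix.mul_apply, psum₂]
        rw [Finset.sum_range_succ']
        have hf0 : (∑ a, ∑ b, (L mu ^ 0) i a * (L mu ^ (n + 1 - 1 - 0)) b j * pb x (L mu a b))
            = ∑ b, (L mu ^ n) b j * pb x (L mu i b) := by
          simp [pow_zero, Matrix.one_apply, Finset.sum_ite_eq, mul_comm]
        have hexp : ∀ s : ℕ, n + 1 - 1 - (s + 1) = n - 1 - s := fun s => by omega
        simp only [hleib₂, Finset.sum_add_distrib]
        congr 1
        · calc ∑ k, L mu i k * pb x ((L mu ^ n) k j)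
              = ∑ k, ∑ s ∈ Finset.range n, ∑ a, ∑ b,
                  L mu i k * ((L mu ^ s) k a * (L mu ^ (n-1-s)) b j * pb x (L mu a b)) := by
                simp only [ih, Finset.mul_sum]
            _ = ∑ s ∈ Finset.range n, ∑ a, ∑ b, ∑ k,
                  L mu i k * ((L mu ^ s) k a * (L mu ^ (n-1-s)) b j * pb x (L mu a b)) := by
                rw [Finset.sum_comm]
                refine Finset.sum_congr rfl fun s _ => ?_
                rw [Finset.sum_comm]
                refine Finset.sum_congr rfl fun a _ => ?_
                rw [Finset.sum_comm]
            _ = ∑ s ∈ Finset.range n, ∑ a, ∑ b,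
                  (L mu ^ (s+1)) i a * (L mu ^ (n-1-s)) b j * pb x (L mu a b) := by
                refine Finset.sum_congr rfl fun s _ => Finset.sum_congr rfl fun a _ =>
                  Finset.sum_congr rfl fun b _ => ?_
                rw [pow_succ', Matrix.mul_apply, Finset.sum_mul, Finset.sum_mul]
                exact Finset.sum_congr rfl fun k _ => by ring
            _ = ∑ s ∈ Finset.range n, ∑ a, ∑ b,
                  (L mu ^ (s+1)) i a * (L mu ^ (n+1-1-(s+1))) b j * pb x (L mu a b) := by
                simp only [hexp]
        · exact hf0.symm
    -- trace derivatives
    have tr1 : ∀ (m : ℕ) (x : B),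
        pb (Matrix.trace (L lam ^ (m+1))) x
          = ∑ _s ∈ Finset.range (m+1), ∑ a, ∑ b, (L lam ^ m) b a * pb (L lam a b) x := by
      intro m x
      simp only [Matrix.trace, Matrix.diag]
      rw [psum₁]
      simp only [d1]
      rw [Finset.sum_comm]
      refine Finset.sum_congr rfl fun s hs => ?_
      rw [Finset.sum_comm]
      refine Finset.sum_congr rfl fun a _ => ?_
      rw [Finset.sum_comm]
      refine Finset.sum_congr rfl fun b _ => ?_
      have hsm : s ≤ m := Nat.lt_succ_iff.mp (Finset.mem_range.mp hs)
      have hYm : (∑ i, (L lam ^ (m+1-1-s)) b i * (L lam ^ s) i a) = (L lam ^ m) b a := by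
        rw [← Matrix.mul_apply, ← pow_add, show m+1-1-s+s = m by omega]
      rw [← hYm, Finset.sum_mul]
      exact Finset.sum_congr rfl fun i _ => by ring
    have tr2 : ∀ (n : ℕ) (x : B),
        pb x (Matrix.trace (L mu ^ (n+1)))
          = ∑ _t ∈ Finset.range (n+1), ∑ c, ∑ d, (L mu ^ n) d c * pb x (L mu c d) := by
      intro n x
      simp only [Matrix.trace, Matrix.diag]
      rw [psum₂]
      simp only [d2]
      rw [Finset.sum_comm]
      refine Finset.sum_congr rfl fun s hs => ?_
      rw [Finset.sum_comm]
      refine Finset.sum_congr rfl fun a _ => ?_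
      rw [Finset.sum_comm]
      refine Finset.sum_congr rfl fun b _ => ?_
      have hsm : s ≤ n := Nat.lt_succ_iff.mp (Finset.mem_range.mp hs)
      have hYm : (∑ i, (L mu ^ (n+1-1-s)) b i * (L mu ^ s) i a) = (L mu ^ n) b a := by
        rw [← Matrix.mul_apply, ← pow_add, show n+1-1-s+s = n by omega]
      rw [← hYm, Finset.sum_mul]
      exact Finset.sum_congr rfl fun i _ => by ring
    -- sum-reordering helpers
    have pull3 : ∀ (f : Fin N → Fin N → Fin N → B),
        (∑ x, ∑ y, ∑ z, f x y z) = ∑ z, ∑ x, ∑ y, f x y z := by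
      intro f
      have h1 : ∀ x : Fin N, (∑ y, ∑ z, f x y z) = ∑ z, ∑ y, f x y z :=
        fun x => Finset.sum_comm
      simp_rw [h1]
      exact Finset.sum_comm
    have pull4 : ∀ (f : Fin N → Fin N → Fin N → Fin N → B),
        (∑ x, ∑ y, ∑ z, ∑ w, f x y z w) = ∑ w, ∑ x, ∑ y, ∑ z, f x y z w := by
      intro f
      have h1 : ∀ x : Fin N, (∑ y, ∑ z, ∑ w, f x y z w) = ∑ w, ∑ y, ∑ z, f x y z w :=
        fun x => pull3 _
      simp_rw [h1]
      exact Finset.sum_comm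
    have pull5 : ∀ (f : Fin N → Fin N → Fin N → Fin N → Fin N → B),
        (∑ x, ∑ y, ∑ z, ∑ w, ∑ v, f x y z w v) = ∑ v, ∑ x, ∑ y, ∑ z, ∑ w, f x y z w v := by
      intro f
      have h1 : ∀ x : Fin N, (∑ y, ∑ z, ∑ w, ∑ v, f x y z w v)
          = ∑ v, ∑ y, ∑ z, ∑ w, f x y z w v := fun x => pull4 _
      simp_rw [h1]
      exact Finset.sum_comm
    -- final assembly
    intro p q hp _ hq _
    obtain ⟨m, rfl⟩ : ∃ m, p = m + 1 := ⟨p - 1, by omega⟩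
    obtain ⟨n, rfl⟩ : ∃ n, q = n + 1 := ⟨q - 1, by omega⟩
    have core : ∑ a, ∑ b, ∑ c, ∑ d,
        (L lam ^ m) b a * ((L mu ^ n) d c * pb (L lam a b) (L mu c d)) = 0 := by
      have red1 : (∑ a, ∑ b, ∑ c, ∑ d, ∑ e,
            (L lam ^ m) b a * ((L mu ^ n) d c * (r lam mu a e c d * L lam e b)))
          = ∑ e, ∑ a, ∑ c, ∑ d,
            (L lam ^ (m+1)) e a * ((L mu ^ n) d c * r lam mu a e c d) := by
        have step1 : (∑ a, ∑ b, ∑ c, ∑ d, ∑ e,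
              (L lam ^ m) b a * ((L mu ^ n) d c * (r lam mu a e c d * L lam e b)))
            = ∑ a, ∑ c, ∑ d, ∑ e,
              (L lam ^ (m+1)) e a * ((L mu ^ n) d c * r lam mu a e c d) := by
          refine Finset.sum_congr rfl fun a _ => ?_
          refine ((pull4 fun c d e b =>
            (L lam ^ m) b a * ((L mu ^ n) d c * (r lam mu a e c d * L lam e b))).symm).trans ?_
          refine Finset.sum_congr rfl fun c _ => Finset.sum_congr rfl fun d _ =>
            Finset.sum_congr rfl fun e _ => ?_
          have hp : (L lam ^ (m+1)) e a = ∑ b, L lam e b * (L lam ^ m) b a := by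
            rw [pow_succ', Matrix.mul_apply]
          rw [hp, Finset.sum_mul]
          exact Finset.sum_congr rfl fun b _ => by ring
        exact step1.trans (pull4 _)
      have red2 : (∑ a, ∑ b, ∑ c, ∑ d, ∑ e,
            (L lam ^ m) b a * ((L mu ^ n) d c * (r lam mu e b c d * L lam a e)))
          = ∑ e, ∑ a, ∑ c, ∑ d,
            (L lam ^ (m+1)) e a * ((L mu ^ n) d c * r lam mu a e c d) := by
        have step1 : (∑ a, ∑ b, ∑ c, ∑ d, ∑ e,
              (L lam ^ m) b a * ((L mu ^ n) d c * (r lam mu e b c d * L lam a e)))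
            = ∑ b, ∑ c, ∑ d, ∑ e,
              (L lam ^ (m+1)) b e * ((L mu ^ n) d c * r lam mu e b c d) := by
          refine ((pull5 fun b c d e a =>
            (L lam ^ m) b a * ((L mu ^ n) d c * (r lam mu e b c d * L lam a e))).symm).trans ?_
          refine Finset.sum_congr rfl fun b _ => Finset.sum_congr rfl fun c _ =>
            Finset.sum_congr rfl fun d _ => Finset.sum_congr rfl fun e _ => ?_
          have hp : (L lam ^ (m+1)) b e = ∑ a, (L lam ^ m) b a * L lam a e := by
            rw [pow_succ, Matrix.mul_apply]
          rw [hp, Finset.sum_mul]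
          exact Finset.sum_congr rfl fun a _ => by ring
        refine step1.trans ?_
        refine (pull4 _).trans ?_
        exact Finset.sum_comm
      have red3 : (∑ a, ∑ b, ∑ c, ∑ d, ∑ e,
            (L lam ^ m) b a * ((L mu ^ n) d c * (r mu lam c e a b * L mu e d)))
          = ∑ a, ∑ b, ∑ e, ∑ c,
            (L lam ^ m) b a * ((L mu ^ (n+1)) e c * r mu lam c e a b) := by
        refine Finset.sum_congr rfl fun a _ => Finset.sum_congr rfl fun b _ => ?_
        refine Eq.trans ?_ (Finset.sum_comm)
        refine Finset.sum_congr rfl fun c _ => ?_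
        refine (Finset.sum_comm).trans ?_
        refine Finset.sum_congr rfl fun e _ => ?_
        have hp : (L mu ^ (n+1)) e c = ∑ d, L mu e d * (L mu ^ n) d c := by
          rw [pow_succ', Matrix.mul_apply]
        rw [hp, Finset.sum_mul, Finset.mul_sum]
        exact Finset.sum_congr rfl fun d _ => by ring
      have red4 : (∑ a, ∑ b, ∑ c, ∑ d, ∑ e,
            (L lam ^ m) b a * ((L mu ^ n) d c * (r mu lam e d a b * L mu c e)))
          = ∑ a, ∑ b, ∑ e, ∑ c,
            (L lam ^ m) b a * ((L mu ^ (n+1)) e c * r mu lam c e a b) := by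
        refine Finset.sum_congr rfl fun a _ => Finset.sum_congr rfl fun b _ => ?_
        refine ((pull3 fun d e c =>
          (L lam ^ m) b a * ((L mu ^ n) d c * (r mu lam e d a b * L mu c e))).symm).trans ?_
        refine Finset.sum_congr rfl fun d _ => Finset.sum_congr rfl fun e _ => ?_
        have hp : (L mu ^ (n+1)) d e = ∑ c, (L mu ^ n) d c * L mu c e := by
          rw [pow_succ, Matrix.mul_apply]
        rw [hp, Finset.sum_mul, Finset.mul_sum]
        exact Finset.sum_congr rfl fun c _ => by ring
      simp only [hBV, Finset.mul_sum, mul_sub, mul_add,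
        Finset.sum_sub_distrib, Finset.sum_add_distrib]
      rw [red1, red2, red3, red4]
      ring
    rw [tr1]
    simp only [tr2]
    simp only [Finset.mul_sum]
    refine Finset.sum_eq_zero fun s _ => ?_
    have hconst : ∀ a b : Fin N, (∑ _t ∈ Finset.range (n+1), ∑ c, ∑ d,
        (L lam ^ m) b a * ((L mu ^ n) d c * pb (L lam a b) (L mu c d)))
        = (n+1) • ∑ c, ∑ d, (L lam ^ m) b a * ((L mu ^ n) d c * pb (L lam a b) (L mu c d)) := by
      intro a b; rw [Finset.sum_const, Finset.card_range]
    simp only [hconst]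
    simp only [← Finset.smul_sum]
    rw [core, smul_zero]
end
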